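/- arXiv:2302.00279 — 5 statements merged into one kernel-verified Lean document; each statement's English description precedes it below -/
import Mathlib

section
/- Let 0 < θ < 1/10. Then the function F_θ(x) = x + 1 + θ − (1+x)·√((x+4)/5) has exactly one zero x⋆ in the interval (1, +∞), and this zero satisfies 1 + 4θ < x⋆ < 1 + 6θ. -/
private lemma poly_of_zero (θ x : ℝ) (hx : 1 < x)
    (h : x + 1 + θ - (1 + x) * Real.sqrt ((x + 4) / 5) = 0) :
    5 * (x + 1 + θ)^2 = (1 + x)^2 * (x + 4) := by
  have hnn : (0:ℝ) ≤ (x + 4) / 5 := by linarith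
  have hs : Real.sqrt ((x + 4) / 5) ^ 2 = (x + 4) / 5 := Real.sq_sqrt hnn
  have heq : x + 1 + θ = (1 + x) * Real.sqrt ((x + 4) / 5) := by linarith
  have h2 : (x + 1 + θ)^2 = (1 + x)^2 * ((x + 4) / 5) := by
    rw [heq, mul_pow, hs]
  linear_combination 5 * h2

/-- Claim 2.6: for `0 < θ < 1/10`, the function
`F_θ(x) = x + 1 + θ − (1+x)·√((x+4)/5)` has exactly one zero `x⋆` in `(1, ∞)`,
and this zero satisfies `1 + 4θ < x⋆ < 1 + 6θ`. -/
theorem unique_zero_of_F (θ : ℝ) (hθ0 : 0 < θ) (hθ1 : θ < 1/10) :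
    ∃ xstar : ℝ,
      (1 < xstar ∧ xstar + 1 + θ - (1 + xstar) * Real.sqrt ((xstar + 4) / 5) = 0) ∧
      (∀ y : ℝ, 1 < y → y + 1 + θ - (1 + y) * Real.sqrt ((y + 4) / 5) = 0 → y = xstar) ∧
      1 + 4 * θ < xstar ∧ xstar < 1 + 6 * θ := by
  set F : ℝ → ℝ := fun x => x + 1 + θ - (1 + x) * Real.sqrt ((x + 4) / 5) with hF
  have hab : (1 + 4 * θ : ℝ) ≤ 1 + 6 * θ := by linarith
  have hcont : Continuous F := by
    apply Continuous.sub
    · continuity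
    · exact (continuous_const.add continuous_id).mul
        ((continuous_id.add continuous_const).div_const 5).sqrt
  -- sign at a = 1 + 4θ : F a > 0
  have hFa : 0 < F (1 + 4 * θ) := by
    simp only [hF]
    have hnn : (0:ℝ) ≤ (1 + 4 * θ + 4) / 5 := by linarith
    have hs0 : 0 ≤ Real.sqrt ((1 + 4 * θ + 4) / 5) := Real.sqrt_nonneg _
    have hs2 : Real.sqrt ((1 + 4 * θ + 4) / 5) ^ 2 = (1 + 4 * θ + 4) / 5 :=
      Real.sq_sqrt hnn
    nlinarith [sq_nonneg (Real.sqrt ((1 + 4 * θ + 4) / 5) - 1),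
      sq_nonneg ((1 + (1 + 4 * θ)) * Real.sqrt ((1 + 4 * θ + 4) / 5) - (2 + 5 * θ)),
      mul_pos hθ0 hθ0, mul_pos (mul_pos hθ0 hθ0) hθ0]
  -- sign at b = 1 + 6θ : F b < 0
  have hFb : F (1 + 6 * θ) < 0 := by
    simp only [hF]
    have hnn : (0:ℝ) ≤ (1 + 6 * θ + 4) / 5 := by linarith
    have hs0 : 0 ≤ Real.sqrt ((1 + 6 * θ + 4) / 5) := Real.sqrt_nonneg _
    have hs2 : Real.sqrt ((1 + 6 * θ + 4) / 5) ^ 2 = (1 + 6 * θ + 4) / 5 :=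
      Real.sq_sqrt hnn
    nlinarith [sq_nonneg (Real.sqrt ((1 + 6 * θ + 4) / 5) - 1),
      sq_nonneg ((1 + (1 + 6 * θ)) * Real.sqrt ((1 + 6 * θ + 4) / 5) - (2 + 7 * θ)),
      mul_pos hθ0 hθ0, mul_pos (mul_pos hθ0 hθ0) hθ0]
  -- IVT
  have hsub := intermediate_value_Ioo' hab (hcont.continuousOn
    (s := Set.Icc (1 + 4 * θ) (1 + 6 * θ)))
  obtain ⟨x, hx, hFx⟩ := hsub (⟨hFb, hFa⟩ : (0:ℝ) ∈ Set.Ioo (F (1 + 6 * θ)) (F (1 + 4 * θ)))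
  have hx1 : 1 < x := by have := hx.1; linarith
  refine ⟨x, ⟨hx1, hFx⟩, ?_, hx.1, hx.2⟩
  intro y hy1 hFy
  have hpx := poly_of_zero θ x hx1 hFx
  have hpy := poly_of_zero θ y hy1 hFy
  by_contra hne
  have hfac : (y - x) * (y^2 + x*y + x^2 + (x + y) - 1 - 10*θ) = 0 := by
    linear_combination hpx - hpy
  rcases mul_eq_zero.mp hfac with h | h
  · exact hne (by linarith)
  · nlinarith [mul_pos (lt_trans zero_lt_one hx1) (lt_trans zero_lt_one hy1),
      sq_nonneg x, sq_nonneg y]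
end

section
/- Let k̲ = (1/4)·√((3/10)·(69 + 11·√33)). Then for every x ≥ 0 one has k̲·x ≤ (1+x)·√((4+x)/5), with equality if and only if x = (1+√33)/2. -/
/-- With `k̲ = (1/4)·√((3/10)·(69 + 11√33))`, for every `x ≥ 0` one has
`k̲·x ≤ (1+x)·√((4+x)/5)`, with equality iff `x = (1 + √33)/2`. -/
theorem tangent_line_through_origin (x : ℝ) (hx : 0 ≤ x) :
    (1/4) * Real.sqrt ((3/10) * (69 + 11 * Real.sqrt 33)) * x
      ≤ (1 + x) * Real.sqrt ((4 + x) / 5) ∧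
    ((1/4) * Real.sqrt ((3/10) * (69 + 11 * Real.sqrt 33)) * x
        = (1 + x) * Real.sqrt ((4 + x) / 5) ↔ x = (1 + Real.sqrt 33) / 2) := by
  set s := Real.sqrt 33 with hs
  have hs2 : s ^ 2 = 33 := Real.sq_sqrt (by norm_num)
  have hs0 : 0 ≤ s := Real.sqrt_nonneg _
  have hs6 : s < 6 := by nlinarith
  set k := (1/4) * Real.sqrt ((3/10) * (69 + 11 * s)) with hk
  have hk0 : 0 ≤ k := by positivity
  have hk2 : k ^ 2 = (3/160) * (69 + 11 * s) := by
    rw [hk, mul_pow, Real.sq_sqrt (by nlinarith)]; ring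
  set t := Real.sqrt ((4 + x) / 5) with ht
  have ht0 : 0 < t := Real.sqrt_pos.mpr (by linarith)
  have ht2 : t ^ 2 = (4 + x) / 5 := Real.sq_sqrt (by linarith)
  have key : ((1 + x) * t) ^ 2 - (k * x) ^ 2
      = (1/5) * (x - (1 + s)/2) ^ 2 * (x + (17 - s)/32) := by
    rw [mul_pow, mul_pow, ht2, hk2]
    linear_combination (s/640 - 9*x/160 - 3/128) * hs2
  have hpos : 0 < (1 + x) * t + k * x := by positivity
  have hc : 0 < x + (17 - s)/32 := by linarith
  have hP : 0 ≤ ((1 + x) * t) ^ 2 - (k * x) ^ 2 := by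
    rw [key]; positivity
  constructor
  · nlinarith [hP, hpos]
  constructor
  · intro heq
    have h0 : (1/5) * (x - (1 + s)/2) ^ 2 * (x + (17 - s)/32) = 0 := by
      rw [← key, heq]; ring
    have h1 : (x - (1 + s)/2) ^ 2 = 0 := by
      rcases mul_eq_zero.mp h0 with h | h
      · rcases mul_eq_zero.mp h with h | h
        · norm_num at h
        · exact h
      · linarith
    have := pow_eq_zero_iff (n := 2) (by norm_num) |>.mp h1
    linarith
  · intro hxa
    have h0 : ((1 + x) * t) ^ 2 - (k * x) ^ 2 = 0 := by
      rw [key, hxa]; ring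
    have h1 : (k * x - (1 + x) * t) * ((1 + x) * t + k * x) = 0 := by
      linear_combination -h0
    rcases mul_eq_zero.mp h1 with h | h
    · linarith
    · linarith
end

section
/- Let c ∈ (0,1), 0 < α₊ ≤ c²/16, k̲ = (1/4)·√((3/10)·(69+11√33)), 0 < k₋ ≤ k̲, k₊ ≥ 2, and x₊ = (13+√185)/2. Define the subsets of ℝ²: 𝒳₀ = {(x,y) : 1 ≤ x ≤ x₊ and (1+x)√((4+x)/5) < y < min(k₊·x, 2x₊)}; 𝒳₁ = {(x,y) : 1 ≤ x ≤ x₊, y > 2, and max(k₋·x, (1+x)√((4+x)/5)) < y < k₊·x}; 𝒳₂ = {(x,y) : 1 ≤ x ≤ x₊ and y > 1 + (2/c)·√α₊·x}; 𝒳₃ = {(x,y) : 1 ≤ x ≤ x₊, y > 2, and 5y² − (1 + (2/c)√α₊·y)²·(4 + (2/c)√α₊·y) > 0}. Then 𝒳₀ ⊆ 𝒳₁ ∩ 𝒳₂ ∩ 𝒳₃. -/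
private lemma cubic_mono {a b : ℝ} (ha0 : 0 ≤ a) (hab : a ≤ b) :
    (1 + a) ^ 2 * (4 + a) ≤ (1 + b) ^ 2 * (4 + b) := by
  have hb0 : 0 ≤ b := le_trans ha0 hab
  have key : 0 ≤ (b - a) * (a^2 + a*b + b^2 + 6*a + 6*b + 9) := by
    apply mul_nonneg (by linarith)
    nlinarith [sq_nonneg a, sq_nonneg b, mul_nonneg ha0 hb0]
  nlinarith [key]

private lemma poly_bound {x w : ℝ} (hx0 : 0 < x) (hw0 : 0 ≤ w) (hw2 : w ^ 2 = 33) :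
    3 * (69 + 11 * w) * x ^ 2 ≤ 32 * (1 + x) ^ 2 * (4 + x) := by
  have hpos : 0 ≤ 8 * (2*x - 1 - w)^2 * ((17 + w) * x + 8) := by
    apply mul_nonneg (by positivity)
    nlinarith [mul_nonneg hw0 hx0.le]
  have hid : 8 * (2*x - 1 - w)^2 * ((17 + w) * x + 8)
      = (17 + w) * (32 * (1 + x) ^ 2 * (4 + x) - 3 * (69 + 11 * w) * x ^ 2) := by
    linear_combination (x^2 + 8*x*w + 152*x + 64) * hw2
  rw [hid] at hpos
  nlinarith [hpos, hw0]

private lemma one_le_f {x : ℝ} (hx : 1 ≤ x) : 1 ≤ Real.sqrt ((4 + x) / 5) := by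
  have h0 : (0:ℝ) ≤ Real.sqrt ((4 + x) / 5) := Real.sqrt_nonneg _
  have h2 : (Real.sqrt ((4 + x) / 5)) ^ 2 = (4 + x) / 5 := Real.sq_sqrt (by linarith)
  nlinarith [h0, h2]

private lemma f_lower {x f : ℝ} (hx : 1 ≤ x) (hf : 1 ≤ f) : 1 + x ≤ (1 + x) * f := by
  nlinarith [mul_nonneg (sub_nonneg.2 hf) (show (0:ℝ) ≤ 1 + x by linarith)]

private lemma sqrt185_gt : (13:ℝ) < Real.sqrt 185 := by
  have h2 : (Real.sqrt 185) ^ 2 = 185 := Real.sq_sqrt (by norm_num)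
  nlinarith [Real.sqrt_nonneg (185:ℝ), h2]

private lemma X3_core {y s ε : ℝ} (hy2 : 2 < y) (hyx : y < 13 + s)
    (hs2 : s ^ 2 = 185) (hs13 : 13 < s)
    (hmono : (1 + ε*y) ^ 2 * (4 + ε*y) ≤ (1 + y/2) ^ 2 * (4 + y/2)) :
    0 < 5 * y ^ 2 - (1 + ε*y) ^ 2 * (4 + ε*y) := by
  have hprod : 0 < (y - 2) * ((13 + s - y) * (y - 13 + s)) :=
    mul_pos (by linarith) (mul_pos (by linarith) (by linarith))
  nlinarith [hprod, hs2, hmono]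

private lemma key_sq {x w t f : ℝ} (hx0 : 0 < x) (hw0 : 0 ≤ w) (hw2 : w ^ 2 = 33)
    (ht2 : t ^ 2 = (3/10) * (69 + 11 * w)) (hf2 : f ^ 2 = (4 + x) / 5) :
    (1/4 * t * x) ^ 2 ≤ ((1 + x) * f) ^ 2 := by
  have hpoly := poly_bound hx0 hw0 hw2
  have e1 : (1/4 * t * x) ^ 2 = t ^ 2 * (x ^ 2 / 16) := by ring
  have e2 : ((1 + x) * f) ^ 2 = f ^ 2 * (1 + x) ^ 2 := by ring
  rw [e1, e2, ht2, hf2]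
  linarith [hpoly]

set_option maxHeartbeats 1000000 in
/-- Proposition 2.3 (domain inclusion) in rescaled coordinates `x = Λ₂/G`, `y = Λ₁/G`:
under the stated conditions on `c, α₊, k₋, k₊`, the set `𝒳₀` is contained in
`𝒳₁ ∩ 𝒳₂ ∩ 𝒳₃`, where `x₊ = (13+√185)/2`. -/
theorem domain_inclusion (c αplus kminus kplus : ℝ)
    (hc0 : 0 < c) (hc1 : c < 1)
    (hα0 : 0 < αplus) (hα : αplus ≤ c^2 / 16)
    (hkm0 : 0 < kminus)
    (hkm : kminus ≤ (1/4) * Real.sqrt ((3/10) * (69 + 11 * Real.sqrt 33)))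
    (hkp : 2 ≤ kplus) :
    {p : ℝ × ℝ |
        1 ≤ p.1 ∧ p.1 ≤ (13 + Real.sqrt 185) / 2 ∧
        (1 + p.1) * Real.sqrt ((4 + p.1) / 5) < p.2 ∧
        p.2 < min (kplus * p.1) (2 * ((13 + Real.sqrt 185) / 2))} ⊆
      ({p : ℝ × ℝ |
          1 ≤ p.1 ∧ p.1 ≤ (13 + Real.sqrt 185) / 2 ∧ 2 < p.2 ∧
          max (kminus * p.1) ((1 + p.1) * Real.sqrt ((4 + p.1) / 5)) < p.2 ∧
          p.2 < kplus * p.1} ∩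
        {p : ℝ × ℝ |
          1 ≤ p.1 ∧ p.1 ≤ (13 + Real.sqrt 185) / 2 ∧
          1 + (2 / c) * Real.sqrt αplus * p.1 < p.2} ∩
        {p : ℝ × ℝ |
          1 ≤ p.1 ∧ p.1 ≤ (13 + Real.sqrt 185) / 2 ∧ 2 < p.2 ∧
          0 < 5 * p.2^2 - (1 + (2 / c) * Real.sqrt αplus * p.2)^2
                * (4 + (2 / c) * Real.sqrt αplus * p.2)}) := by
  rintro ⟨x, y⟩ ⟨hx1, hx2, hyl, hyr⟩
  simp only [Set.mem_setOf_eq, Set.mem_inter_iff] at *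
  have hx0 : (0:ℝ) < x := by linarith
  -- √185
  set s : ℝ := Real.sqrt 185 with hs_def
  have hs2 : s ^ 2 = 185 := Real.sq_sqrt (by norm_num)
  have hs13 : 13 < s := sqrt185_gt
  -- f = √((4+x)/5)
  set f : ℝ := Real.sqrt ((4 + x) / 5) with hf_def
  have hf0 : 0 ≤ f := Real.sqrt_nonneg _
  have hf2 : f ^ 2 = (4 + x) / 5 := Real.sq_sqrt (by linarith)
  have hf1 : 1 ≤ f := one_le_f hx1
  -- y bounds
  have hfx : 1 + x ≤ (1 + x) * f := f_lower hx1 hf1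
  have hy2 : 2 < y := by linarith
  have hykp : y < kplus * x := lt_of_lt_of_le hyr (min_le_left _ _)
  have hyx : y < 13 + s := by
    have := lt_of_lt_of_le hyr (min_le_right _ _)
    linarith
  -- √33
  set w : ℝ := Real.sqrt 33 with hw_def
  have hw2 : w ^ 2 = 33 := Real.sq_sqrt (by norm_num)
  have hw0 : 0 ≤ w := Real.sqrt_nonneg _
  -- the k̲ bound: k̲ x ≤ (1+x) f
  set t : ℝ := Real.sqrt ((3/10) * (69 + 11 * w)) with ht_def
  have ht2 : t ^ 2 = (3/10) * (69 + 11 * w) := Real.sq_sqrt (by positivity)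
  have ht0 : 0 ≤ t := Real.sqrt_nonneg _
  have hkbar : 1/4 * t * x ≤ (1 + x) * f := by
    have h1 : 0 ≤ 1/4 * t * x := by positivity
    have h2 : 0 ≤ (1 + x) * f := by positivity
    have := Real.sqrt_le_sqrt (key_sq hx0 hw0 hw2 ht2 hf2)
    rwa [Real.sqrt_sq h1, Real.sqrt_sq h2] at this
  have hkmx : kminus * x < y := by
    have : kminus * x ≤ 1/4 * t * x := by
      apply mul_le_mul_of_nonneg_right _ hx0.le
      linarith [hkm]
    linarith [hkbar, hyl]
  -- ε = (2/c)√α₊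
  have hε0 : 0 < 2 / c * Real.sqrt αplus := by positivity
  have hεhalf : 2 / c * Real.sqrt αplus ≤ 1 / 2 := by
    have h1 : Real.sqrt αplus ≤ c / 4 := by
      have := Real.sqrt_le_sqrt hα
      rwa [show c ^ 2 / 16 = (c/4)^2 by ring, Real.sqrt_sq (by positivity)] at this
    rw [div_mul_eq_mul_div, div_le_div_iff₀ hc0 (by norm_num)]
    linarith
  set ε : ℝ := 2 / c * Real.sqrt αplus with hε_def
  -- 𝒳₂
  have hεx : ε * x ≤ 1/2 * x := mul_le_mul_of_nonneg_right hεhalf hx0.le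
  have hX2 : 1 + ε * x < y := by linarith
  -- 𝒳₃
  have hy0 : (0:ℝ) < y := by linarith
  have hX3 : 0 < 5 * y ^ 2 - (1 + ε * y) ^ 2 * (4 + ε * y) := by
    have ha : ε * y ≤ y / 2 := by
      have := mul_le_mul_of_nonneg_right hεhalf hy0.le
      linarith
    exact X3_core hy2 hyx hs2 hs13 (cubic_mono (by positivity) ha)
  exact ⟨⟨⟨hx1, hx2, hy2, max_lt hkmx hyl, hykp⟩, hx1, hx2, hX2⟩, hx1, hx2, hy2, hX3⟩
end

section
/- Let 0 < θ < 1/10, let x⋆ ∈ (1+4θ, 1+6θ) be the unique zero in (1,∞) of F_θ(x) = x + 1 + θ − (1+x)·√((x+4)/5). Then the integral of F_θ over the interval [1+θ, x⋆] satisfies ∫_{1+θ}^{x⋆} F_θ(x) dx ≥ (9/10)·θ². -/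
/-!
Write `f x = (1 + x) √((x + 4) / 5)`, so that `F_θ x = x + 1 + θ - f x`. With `u = x + 4`,
`√5 · f x = (u - 3) √u = u ^ (3/2) - 3 √u`, a convex function of `u ≥ 0`; hence `F_θ` is concave.
Since `F_θ 1 = θ` and `F_θ x⋆ = 0`, concavity puts `F_θ` above the chord `θ (x⋆ - x) / (x⋆ - 1)`
on `[1, x⋆]`. Integrating the chord over `[1 + θ, x⋆]` gives `θ (x⋆ - 1 - θ)² / (2 (x⋆ - 1))`,
which is at least `(9/10) θ²` as soon as `x⋆ - 1 > 4θ`.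
-/

open Set intervalIntegral

noncomputable section

def f (x : ℝ) : ℝ := (1 + x) * √((x + 4) / 5)

def F (θ x : ℝ) : ℝ := x + 1 + θ - f x

end

theorem convexOn_sub_mul_sqrt {c : ℝ} (hc : 0 ≤ c) :
    ConvexOn ℝ (Ici 0) (fun u : ℝ => (u - c) * √u) := by
  have hrpow : ConvexOn ℝ (Ici 0) (fun u : ℝ => u ^ (3 / 2 : ℝ)) :=
    convexOn_rpow (by norm_num)
  have hsqrt : ConcaveOn ℝ (Ici 0) (fun u : ℝ => c • √u) :=
    Real.strictConcaveOn_sqrt.concaveOn.smul hc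
  refine (hrpow.sub hsqrt).congr fun u (hu : 0 ≤ u) => ?_
  rw [Pi.sub_apply, show (3 / 2 : ℝ) = 1 + 1 / 2 by norm_num, Real.rpow_add' hu (by norm_num),
    Real.rpow_one, ← Real.sqrt_eq_rpow, smul_eq_mul]
  ring

theorem convexOn_f : ConvexOn ℝ (Ici (-4)) f := by
  have h := ((convexOn_sub_mul_sqrt (c := 3) (by norm_num)).translate_left 4).smul
    (c := (√5)⁻¹) (by positivity)
  have hdom : (fun z : ℝ => 4 + z) ⁻¹' Ici 0 = Ici (-4) := by
    ext z; simp only [mem_preimage, mem_Ici]; constructor <;> intro <;> linarith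
  rw [hdom] at h
  refine h.congr fun x (hx : -4 ≤ x) => ?_
  simp only [Function.comp_apply, smul_eq_mul, f, Real.sqrt_div (by linarith : 0 ≤ x + 4)]
  ring

theorem concaveOn_F (θ : ℝ) : ConcaveOn ℝ (Ici (-4)) (F θ) := by
  have hlin : ConcaveOn ℝ (Ici (-4)) (fun x : ℝ => x + (1 + θ)) :=
    (concaveOn_id (convex_Ici _)).add (concaveOn_const _ (convex_Ici _))
  refine (hlin.add convexOn_f.neg).congr fun x _ => ?_
  simp only [F, Pi.add_apply, Pi.neg_apply]
  ring

theorem F_one (θ : ℝ) : F θ 1 = θ := by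
  norm_num [F, f]

theorem chord_le_F {θ xstar x : ℝ} (hzero : F θ xstar = 0) (h1x : 1 < x) (hx : x < xstar) :
    θ * (xstar - x) ≤ (xstar - 1) * F θ x := by
  have h := (concaveOn_F θ).neg.secant_mono_aux1 (x := 1) (y := x) (z := xstar)
    (by norm_num) (by simp only [mem_Ici]; linarith) h1x hx
  simp only [Pi.neg_apply, F_one, hzero] at h
  linarith

theorem integral_const_mul_sub (a b c : ℝ) :
    ∫ x in a..b, c * (b - x) = c * (b - a) ^ 2 / 2 := by
  rw [integral_const_mul, integral_comp_sub_left (fun x => x), integral_id]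
  ring

theorem nine_tenths_sq_le_chord_integral {θ s : ℝ} (hθ : 0 < θ) (hs : 4 * θ < s) :
    (9 / 10) * θ ^ 2 ≤ θ / s * (s - θ) ^ 2 / 2 := by
  have hs0 : 0 < s := by linarith
  rw [show θ / s * (s - θ) ^ 2 / 2 = θ * (s - θ) ^ 2 / (2 * s) by ring, le_div_iff₀ (by positivity)]
  nlinarith [mul_pos hθ (mul_pos hs0 (by linarith : (0 : ℝ) < 5 * s - 19 * θ)), pow_pos hθ 3]

theorem integral_lower_bound_general (θ xstar : ℝ) (hθ0 : 0 < θ)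
    (hx1 : 1 + 4*θ < xstar)
    (hzero : xstar + 1 + θ - (1 + xstar) * Real.sqrt ((xstar + 4) / 5) = 0) :
    (9/10) * θ^2 ≤
      ∫ x in (1 + θ)..xstar, (x + 1 + θ - (1 + x) * Real.sqrt ((x + 4) / 5)) := by
  have hs : 0 < xstar - 1 := by linarith
  have hchord : ∀ x ∈ Ioo (1 + θ) xstar, θ / (xstar - 1) * (xstar - x) ≤ F θ x := by
    rintro x ⟨hlo, hhi⟩
    rw [div_mul_eq_mul_div, div_le_iff₀' hs]
    exact chord_le_F hzero (by linarith) hhi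
  have hmono := integral_mono_on_of_le_Ioo (μ := MeasureTheory.volume) (by linarith)
    ((by fun_prop : Continuous fun x => θ / (xstar - 1) * (xstar - x)).intervalIntegrable _ _)
    ((by unfold F f; fun_prop : Continuous (F θ)).intervalIntegrable _ _) hchord
  rw [integral_const_mul_sub, show xstar - (1 + θ) = xstar - 1 - θ by ring] at hmono
  exact (nine_tenths_sq_le_chord_integral hθ0 (by linarith)).trans hmono

/-- For `0 < θ < 1/10` and `x⋆ ∈ (1+4θ, 1+6θ)` the zero of
`F_θ(x) = x + 1 + θ − (1+x)·√((x+4)/5)`, one has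
`∫_{1+θ}^{x⋆} F_θ(x) dx ≥ (9/10)·θ²`. -/
theorem integral_lower_bound (θ xstar : ℝ) (hθ0 : 0 < θ) (hθ1 : θ < 1/10)
    (hx1 : 1 + 4*θ < xstar) (hx2 : xstar < 1 + 6*θ)
    (hzero : xstar + 1 + θ - (1 + xstar) * Real.sqrt ((xstar + 4) / 5) = 0) :
    (9/10) * θ^2 ≤
      ∫ x in (1 + θ)..xstar, (x + 1 + θ - (1 + x) * Real.sqrt ((x + 4) / 5)) :=
  integral_lower_bound_general θ xstar hθ0 hx1 hzero
end

section
/- Let 0 < c < 1, 0 < α₊ ≤ c²/16, 0 < c₁ < 1, ε > 0, 0 < γ < c₁²·ε², and let G > 0 satisfy G ≥ 10·c₁²·ε². Let Λ₋ ≤ G, k₋ ∈ (1, (1/4)√((3/10)(69+11√33))], k₊ ≥ 2, and Λ₊ = (G/2)·(13+√185). Define the sets in ℝ³: 𝒜₀ = {(Λ₁,Λ₂,G₂) : G ≤ Λ₂ ≤ Λ₊, (G+Λ₂)·√((4G+Λ₂)/(5G)) < Λ₁ < min(k₊·Λ₂, 2Λ₊), and max((2/c)·√α₊·Λ₂, G)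 < G₂ < Λ₂}, and 𝒜₁ = {(Λ₁,Λ₂,G₂) : Λ₋ < Λ₂ < Λ₊, k₋·Λ₂ < Λ₁ < k₊·Λ₂, |Λ₁ − Λ₂ − G| < c₁²·ε², and Λ₂ − c₁²·ε² < G₂ < Λ₂ − γ}. Then 𝒜₀ ∩ 𝒜₁ is nonempty, and its three-dimensional Lebesgue measure satisfies vol(𝒜₀ ∩ 𝒜₁) ≥ (9/10)·(c₁²ε² − γ)·c₁⁴·ε⁴. -/
open MeasureTheory Set
open scoped Function

/-!
After the measure-preserving shear `(Λ₁, Λ₂, G₂) ↦ (Λ₁ - Λ₂, Λ₂, G₂ - Λ₂)` the constraints of `𝒜₁`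
on the first and last coordinates are intervals of lengths `δ = c₁²ε²` and `δ - γ`. Of the
constraints of `𝒜₀` only the square-root one is binding: by `√(1 + a) ≤ 1 + a / 2` and `10δ ≤ G`
it holds as soon as `Λ₁ - Λ₂ - G > δ (s/5 + s²/100)` with `Λ₂ - G < sδ`. Three boxes under this
staircase, `Λ₂ - G ∈ (nδ, (n+1)δ)` for `n = 1, 2, 3`, have total volume
`(0.56 + 0.31 + 0.04) δ² (δ - γ)`; starting at `Λ₂ - G > δ` keeps `Λ₁ < 2Λ₂`. Nonemptiness follows
from the volume being positive.
-/

section Shear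

variable {A : Type*} [AddGroup A] [MeasurableSpace A] [MeasurableAdd₂ A] [MeasurableNeg A]
  (μ : Measure A) [SFinite μ] [μ.IsAddRightInvariant]

theorem measurePreserving_sub_prod_prod_sub :
    MeasurePreserving (fun p : A × A × A => (p.1 - p.2.1, p.2.1, p.2.2 - p.2.1))
      (μ.prod (μ.prod μ)) (μ.prod (μ.prod μ)) :=
  ((measurePreserving_prodAssoc μ μ μ).comp
    (((measurePreserving_sub_prod μ μ).prod (MeasurePreserving.id μ)).comp
      (measurePreserving_prodAssoc μ μ μ).symm)).comp
    ((MeasurePreserving.id μ).prod (measurePreserving_prod_sub μ μ))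

end Shear

theorem volume_Ioo_prod_Ioo_prod_Ioo {a b c d e f : ℝ} (hab : a ≤ b) (hcd : c ≤ d) :
    volume (Ioo a b ×ˢ Ioo c d ×ˢ Ioo e f) = ENNReal.ofReal ((b - a) * (d - c) * (f - e)) := by
  rw [Measure.volume_eq_prod, Measure.prod_prod, Measure.volume_eq_prod, Measure.prod_prod,
    Real.volume_Ioo, Real.volume_Ioo, Real.volume_Ioo, ← ENNReal.ofReal_mul (sub_nonneg.2 hcd),
    ← ENNReal.ofReal_mul (sub_nonneg.2 hab), mul_assoc]

-- The domains `𝒜₀(G)` and `𝒜₁(G)`, with `δ` standing for `c₁²ε²`.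
def whiskeredDomain (c αplus G kplus Λplus : ℝ) : Set (ℝ × ℝ × ℝ) :=
  {p | G ≤ p.2.1 ∧ p.2.1 ≤ Λplus ∧
    (G + p.2.1) * Real.sqrt ((4 * G + p.2.1) / (5 * G)) < p.1 ∧
    p.1 < min (kplus * p.2.1) (2 * Λplus) ∧
    max ((2 / c) * Real.sqrt αplus * p.2.1) G < p.2.2 ∧ p.2.2 < p.2.1}

def kamDomain (δ γ G Λminus kminus kplus Λplus : ℝ) : Set (ℝ × ℝ × ℝ) :=
  {p | Λminus < p.2.1 ∧ p.2.1 < Λplus ∧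
    kminus * p.2.1 < p.1 ∧ p.1 < kplus * p.2.1 ∧
    |p.1 - p.2.1 - G| < δ ∧
    p.2.1 - δ < p.2.2 ∧ p.2.2 < p.2.1 - γ}

theorem add_mul_sqrt_le {G y : ℝ} (hG : 0 < G) (hy : 0 ≤ G + y) :
    (G + y) * Real.sqrt ((4 * G + y) / (5 * G)) ≤ G + y + (y ^ 2 - G ^ 2) / (10 * G) := by
  have hsqrt : Real.sqrt ((4 * G + y) / (5 * G)) ≤ 1 + (y - G) / (5 * G) / 2 := by
    have h := Real.sqrt_one_add_le (x := (y - G) / (5 * G)) (by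
      rw [le_div_iff₀ (by positivity)]; linarith)
    rwa [one_add_div (by positivity), show 5 * G + (y - G) = 4 * G + y by ring] at h
  calc (G + y) * Real.sqrt ((4 * G + y) / (5 * G))
      ≤ (G + y) * (1 + (y - G) / (5 * G) / 2) := mul_le_mul_of_nonneg_left hsqrt hy
    _ = G + y + (y ^ 2 - G ^ 2) / (10 * G) := by field_simp; ring

theorem sq_sub_sq_div_le {δ G y s : ℝ} (hδ : 0 < δ) (hG : 10 * δ ≤ G) (hGy : G ≤ y)
    (hy : y ≤ G + s * δ) :
    (y ^ 2 - G ^ 2) / (10 * G) ≤ δ * (s / 5 + s ^ 2 / 100) := by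
  have hG0 : 0 < G := by linarith
  have he : (y - G) ^ 2 ≤ (s * δ) ^ 2 := pow_le_pow_left₀ (by linarith) (by linarith) 2
  have hsq : (y - G) ^ 2 / (10 * G) ≤ δ * (s ^ 2 / 100) := by
    rw [div_le_iff₀ (by positivity)]
    nlinarith [mul_le_mul_of_nonneg_left hG (sq_nonneg (s * δ))]
  calc (y ^ 2 - G ^ 2) / (10 * G) = (y - G) / 5 + (y - G) ^ 2 / (10 * G) := by
        field_simp; ring
    _ ≤ δ * (s / 5 + s ^ 2 / 100) := by linarith

theorem two_div_mul_sqrt_le_half {c α : ℝ} (hc : 0 < c) (hα : α ≤ c ^ 2 / 16) :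
    2 / c * Real.sqrt α ≤ 1 / 2 := by
  have h : Real.sqrt α ≤ c / 4 := Real.sqrt_le_iff.2 ⟨by positivity, by linarith⟩
  calc 2 / c * Real.sqrt α ≤ 2 / c * (c / 4) := by gcongr
    _ = 1 / 2 := by field_simp; norm_num

theorem quarter_mul_sqrt_le_five_thirds :
    (1 / 4) * Real.sqrt ((3 / 10) * (69 + 11 * Real.sqrt 33)) ≤ 5 / 3 := by
  have h33 : Real.sqrt 33 ≤ 6 := Real.sqrt_le_iff.2 ⟨by norm_num, by norm_num⟩
  have h : Real.sqrt ((3 / 10) * (69 + 11 * Real.sqrt 33)) ≤ 20 / 3 :=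
    Real.sqrt_le_iff.2 ⟨by norm_num, by nlinarith⟩
  linarith

theorem mk_mem_whiskeredDomain_inter_kamDomain {c αplus δ γ G Λminus kminus kplus Λplus : ℝ}
    (hα : 2 / c * Real.sqrt αplus ≤ 1 / 2) (hγ : 0 < γ) (hG : 10 * δ ≤ G)
    (hΛm : Λminus ≤ G) (hkm : kminus ≤ 5 / 3) (hkp : 2 ≤ kplus) (hΛp : 2 * G ≤ Λplus)
    {x y z : ℝ} (hy : G + δ < y) (hy' : y < G + 4 * δ)
    (hx : G + (y ^ 2 - G ^ 2) / (10 * G) < x - y) (hx' : x - y < G + δ)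
    (hz : y - δ < z) (hz' : z < y - γ) :
    (x, y, z) ∈ whiskeredDomain c αplus G kplus Λplus ∩
      kamDomain δ γ G Λminus kminus kplus Λplus := by
  have hδ : 0 < δ := by linarith
  have hG0 : 0 < G := by linarith
  have hquad : 0 ≤ (y ^ 2 - G ^ 2) / (10 * G) := div_nonneg (by nlinarith) (by positivity)
  have hsqrt := add_mul_sqrt_le hG0 (by linarith : 0 ≤ G + y)
  have hmax : 2 / c * Real.sqrt αplus * y ≤ y / 2 := by nlinarith
  have hkmy : kminus * y ≤ 5 / 3 * y := by nlinarith
  have hkpy : 2 * y ≤ kplus * y := by nlinarith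
  refine ⟨⟨by linarith, by linarith, by linarith, lt_min (by linarith) (by linarith),
    max_lt (by linarith) (by linarith), by linarith⟩,
    by linarith, by linarith, by linarith, by linarith, abs_lt.2 ⟨by linarith, by linarith⟩,
    hz, hz'⟩

def staircaseStep (δ γ G : ℝ) (n : ℤ) : Set (ℝ × ℝ × ℝ) :=
  Ioo (G + δ * ((n + 1) / 5 + (n + 1) ^ 2 / 100)) (G + δ) ×ˢ
    Ioo (G + n * δ) (G + (n + 1) * δ) ×ˢ Ioo (-δ) (-γ)

theorem staircaseStep_lower_le_one {n : ℤ} (hn : n ∈ Finset.Icc 1 3) :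
    ((n : ℝ) + 1) / 5 + ((n : ℝ) + 1) ^ 2 / 100 ≤ 1 := by
  obtain ⟨hn₁, hn₃⟩ := Finset.mem_Icc.1 hn
  have hn₁' : (1 : ℝ) ≤ n := by exact_mod_cast hn₁
  have hn₃' : (n : ℝ) ≤ 3 := by exact_mod_cast hn₃
  nlinarith

theorem volume_staircaseStep {δ γ G : ℝ} (hδ : 0 ≤ δ) {n : ℤ} (hn : n ∈ Finset.Icc 1 3) :
    volume (staircaseStep δ γ G n) =
      ENNReal.ofReal (δ ^ 2 * (δ - γ) * (1 - (n + 1) / 5 - (n + 1) ^ 2 / 100)) := by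
  have hstep := staircaseStep_lower_le_one hn
  rw [staircaseStep, volume_Ioo_prod_Ioo_prod_Ioo (by nlinarith) (by linarith)]
  ring_nf

theorem pairwise_disjoint_staircaseStep (δ γ G : ℝ) :
    Pairwise (Disjoint on staircaseStep δ γ G) := fun m n hmn => by
  refine disjoint_prod.2 (Or.inr (disjoint_prod.2 (Or.inl ?_)))
  simpa only [zsmul_eq_mul, Int.cast_add, Int.cast_one] using
    pairwise_disjoint_Ioo_add_zsmul G δ hmn

theorem shear_preimage_staircaseStep_subset {c αplus δ γ G Λminus kminus kplus Λplus : ℝ}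
    (hα : 2 / c * Real.sqrt αplus ≤ 1 / 2) (hγ : 0 < γ) (hG : 10 * δ ≤ G)
    (hΛm : Λminus ≤ G) (hkm : kminus ≤ 5 / 3) (hkp : 2 ≤ kplus) (hΛp : 2 * G ≤ Λplus)
    {n : ℤ} (hn : n ∈ Finset.Icc 1 3) :
    (fun p : ℝ × ℝ × ℝ => (p.1 - p.2.1, p.2.1, p.2.2 - p.2.1)) ⁻¹' staircaseStep δ γ G n ⊆
      whiskeredDomain c αplus G kplus Λplus ∩ kamDomain δ γ G Λminus kminus kplus Λplus := by
  rintro ⟨x, y, z⟩ ⟨⟨hx, hx'⟩, ⟨hy, hy'⟩, hz, hz'⟩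
  dsimp only at hx hx' hz hz'
  obtain ⟨hn₁, hn₃⟩ := Finset.mem_Icc.1 hn
  have hn₁' : (1 : ℝ) ≤ n := by exact_mod_cast hn₁
  have hn₃' : (n : ℝ) ≤ 3 := by exact_mod_cast hn₃
  have hδ : 0 < δ := by linarith
  have hquad := sq_sub_sq_div_le hδ hG (by nlinarith) hy'.le
  exact mk_mem_whiskeredDomain_inter_kamDomain hα hγ hG hΛm hkm hkp hΛp
    (by nlinarith) (by nlinarith) (by linarith) hx' (by linarith) (by linarith)

theorem ofReal_le_volume_whiskeredDomain_inter_kamDomain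
    {c αplus δ γ G Λminus kminus kplus Λplus : ℝ}
    (hα : 2 / c * Real.sqrt αplus ≤ 1 / 2) (hγ : 0 < γ) (hγδ : γ < δ) (hG : 10 * δ ≤ G)
    (hΛm : Λminus ≤ G) (hkm : kminus ≤ 5 / 3) (hkp : 2 ≤ kplus) (hΛp : 2 * G ≤ Λplus) :
    ENNReal.ofReal (9 / 10 * (δ - γ) * δ ^ 2) ≤
      volume (whiskeredDomain c αplus G kplus Λplus ∩
        kamDomain δ γ G Λminus kminus kplus Λplus) := by
  have hδ : 0 < δ := hγ.trans hγδ
  have hshear := measurePreserving_sub_prod_prod_sub (volume : Measure ℝ)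
  rw [← Measure.volume_eq_prod, ← Measure.volume_eq_prod] at hshear
  have hsteps : ∀ n ∈ Finset.Icc (1 : ℤ) 3, MeasurableSet (staircaseStep δ γ G n) := fun n _ =>
    measurableSet_Ioo.prod (measurableSet_Ioo.prod measurableSet_Ioo)
  calc ENNReal.ofReal (9 / 10 * (δ - γ) * δ ^ 2)
      ≤ ∑ n ∈ Finset.Icc (1 : ℤ) 3,
          ENNReal.ofReal (δ ^ 2 * (δ - γ) * (1 - (n + 1) / 5 - (n + 1) ^ 2 / 100)) := by
        rw [← ENNReal.ofReal_sum_of_nonneg fun n hn => ?_]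
        · refine ENNReal.ofReal_le_ofReal ?_
          rw [show Finset.Icc (1 : ℤ) 3 = {1, 2, 3} from rfl]
          norm_num
          nlinarith [mul_pos (pow_pos hδ 2) (sub_pos.2 hγδ)]
        · have := staircaseStep_lower_le_one hn
          exact mul_nonneg (mul_nonneg (sq_nonneg δ) (sub_nonneg.2 hγδ.le)) (by linarith)
    _ = ∑ n ∈ Finset.Icc (1 : ℤ) 3, volume (staircaseStep δ γ G n) :=
        Finset.sum_congr rfl fun n hn => (volume_staircaseStep hδ.le hn).symm
    _ = volume (⋃ n ∈ Finset.Icc (1 : ℤ) 3, (fun p : ℝ × ℝ × ℝ =>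
          (p.1 - p.2.1, p.2.1, p.2.2 - p.2.1)) ⁻¹' staircaseStep δ γ G n) := by
        rw [measure_biUnion_finset]
        · exact Finset.sum_congr rfl fun n hn =>
            (hshear.measure_preimage (hsteps n hn).nullMeasurableSet).symm
        · exact fun m _ n _ hmn => (pairwise_disjoint_staircaseStep δ γ G hmn).preimage _
        · exact fun n hn => hshear.measurable (hsteps n hn)
    _ ≤ _ := measure_mono (iUnion₂_subset fun n hn =>
        shear_preimage_staircaseStep_subset hα hγ hG hΛm hkm hkp hΛp hn)

theorem coexistence_domain_measure_general (c αplus c₁ ε γ G Λminus kminus kplus Λplus : ℝ)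
    (hc0 : 0 < c)
    (hα : αplus ≤ c^2 / 16)
    (hγ0 : 0 < γ) (hγ : γ < c₁^2 * ε^2)
    (hG : 10 * c₁^2 * ε^2 ≤ G)
    (hΛm : Λminus ≤ G)
    (hkm : kminus ≤ (1/4) * Real.sqrt ((3/10) * (69 + 11 * Real.sqrt 33)))
    (hkp : 2 ≤ kplus)
    (hΛp : Λplus = (G / 2) * (13 + Real.sqrt 185)) :
    ({p : ℝ × ℝ × ℝ |
        (G ≤ p.2.1 ∧ p.2.1 ≤ Λplus ∧
          (G + p.2.1) * Real.sqrt ((4 * G + p.2.1) / (5 * G)) < p.1 ∧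
          p.1 < min (kplus * p.2.1) (2 * Λplus) ∧
          max ((2 / c) * Real.sqrt αplus * p.2.1) G < p.2.2 ∧ p.2.2 < p.2.1) ∧
        (Λminus < p.2.1 ∧ p.2.1 < Λplus ∧
          kminus * p.2.1 < p.1 ∧ p.1 < kplus * p.2.1 ∧
          |p.1 - p.2.1 - G| < c₁^2 * ε^2 ∧
          p.2.1 - c₁^2 * ε^2 < p.2.2 ∧ p.2.2 < p.2.1 - γ)}).Nonempty ∧
    ENNReal.ofReal ((9/10) * (c₁^2 * ε^2 - γ) * c₁^4 * ε^4) ≤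
      volume {p : ℝ × ℝ × ℝ |
        (G ≤ p.2.1 ∧ p.2.1 ≤ Λplus ∧
          (G + p.2.1) * Real.sqrt ((4 * G + p.2.1) / (5 * G)) < p.1 ∧
          p.1 < min (kplus * p.2.1) (2 * Λplus) ∧
          max ((2 / c) * Real.sqrt αplus * p.2.1) G < p.2.2 ∧ p.2.2 < p.2.1) ∧
        (Λminus < p.2.1 ∧ p.2.1 < Λplus ∧
          kminus * p.2.1 < p.1 ∧ p.1 < kplus * p.2.1 ∧
          |p.1 - p.2.1 - G| < c₁^2 * ε^2 ∧
          p.2.1 - c₁^2 * ε^2 < p.2.2 ∧ p.2.2 < p.2.1 - γ)} := by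
  have hG₀ : 0 ≤ G := le_trans (by positivity) hG
  have hΛp' : 2 * G ≤ Λplus := by rw [hΛp]; nlinarith [Real.sqrt_nonneg 185]
  have hvol := ofReal_le_volume_whiskeredDomain_inter_kamDomain
    (two_div_mul_sqrt_le_half hc0 hα) hγ0 hγ (by linarith) hΛm
    (hkm.trans quarter_mul_sqrt_le_five_thirds) hkp hΛp'
  have hpos : 0 < 9 / 10 * (c₁ ^ 2 * ε ^ 2 - γ) * (c₁ ^ 2 * ε ^ 2) ^ 2 :=
    mul_pos (mul_pos (by norm_num) (sub_pos.2 hγ)) (pow_pos (hγ0.trans hγ) 2)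
  rw [show 9 / 10 * (c₁ ^ 2 * ε ^ 2 - γ) * c₁ ^ 4 * ε ^ 4 =
    9 / 10 * (c₁ ^ 2 * ε ^ 2 - γ) * (c₁ ^ 2 * ε ^ 2) ^ 2 by ring]
  exact ⟨nonempty_of_measure_ne_zero ((ENNReal.ofReal_pos.2 hpos).trans_le hvol).ne', hvol⟩

/-- Proposition 2.5: the intersection `𝒜₀ ∩ 𝒜₁` of the action domains supporting
whiskered and maximal KAM tori is nonempty and has Lebesgue measure at least
`(9/10)·(c₁²ε² − γ)·c₁⁴·ε⁴`.  Points of `ℝ × ℝ × ℝ` are `(Λ₁, Λ₂, G₂)`. -/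
theorem coexistence_domain_measure (c αplus c₁ ε γ G Λminus kminus kplus Λplus : ℝ)
    (hc0 : 0 < c) (hc1 : c < 1)
    (hα0 : 0 < αplus) (hα : αplus ≤ c^2 / 16)
    (hc₁0 : 0 < c₁) (hc₁1 : c₁ < 1)
    (hε : 0 < ε) (hγ0 : 0 < γ) (hγ : γ < c₁^2 * ε^2)
    (hG0 : 0 < G) (hG : 10 * c₁^2 * ε^2 ≤ G)
    (hΛm : Λminus ≤ G)
    (hkm1 : 1 < kminus)
    (hkm : kminus ≤ (1/4) * Real.sqrt ((3/10) * (69 + 11 * Real.sqrt 33)))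
    (hkp : 2 ≤ kplus)
    (hΛp : Λplus = (G / 2) * (13 + Real.sqrt 185)) :
    ({p : ℝ × ℝ × ℝ |
        (G ≤ p.2.1 ∧ p.2.1 ≤ Λplus ∧
          (G + p.2.1) * Real.sqrt ((4 * G + p.2.1) / (5 * G)) < p.1 ∧
          p.1 < min (kplus * p.2.1) (2 * Λplus) ∧
          max ((2 / c) * Real.sqrt αplus * p.2.1) G < p.2.2 ∧ p.2.2 < p.2.1) ∧
        (Λminus < p.2.1 ∧ p.2.1 < Λplus ∧
          kminus * p.2.1 < p.1 ∧ p.1 < kplus * p.2.1 ∧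
          |p.1 - p.2.1 - G| < c₁^2 * ε^2 ∧
          p.2.1 - c₁^2 * ε^2 < p.2.2 ∧ p.2.2 < p.2.1 - γ)}).Nonempty ∧
    ENNReal.ofReal ((9/10) * (c₁^2 * ε^2 - γ) * c₁^4 * ε^4) ≤
      volume {p : ℝ × ℝ × ℝ |
        (G ≤ p.2.1 ∧ p.2.1 ≤ Λplus ∧
          (G + p.2.1) * Real.sqrt ((4 * G + p.2.1) / (5 * G)) < p.1 ∧
          p.1 < min (kplus * p.2.1) (2 * Λplus) ∧
          max ((2 / c) * Real.sqrt αplus * p.2.1) G < p.2.2 ∧ p.2.2 < p.2.1) ∧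
        (Λminus < p.2.1 ∧ p.2.1 < Λplus ∧
          kminus * p.2.1 < p.1 ∧ p.1 < kplus * p.2.1 ∧
          |p.1 - p.2.1 - G| < c₁^2 * ε^2 ∧
          p.2.1 - c₁^2 * ε^2 < p.2.2 ∧ p.2.2 < p.2.1 - γ)} :=
  coexistence_domain_measure_general c αplus c₁ ε γ G Λminus kminus kplus Λplus hc0 hα hγ0 hγ hG hΛm
    hkm hkp hΛp
end
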